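/- For all p, q ∈ ℕ, ε(p,q)·ε(q,p) = (-1)^{β(p)β(q) - β(p AND q)}, where β denotes popcount and AND is bitwise and; that is, the commuting sign of two basis blades depends only on their grades and the grade of their common factor. -/

import Mathlib

/-- Number of 1-bits (popcount) of a natural number. -/
def popCount : ℕ → ℕ
  | 0 => 0
  | (n+1) => (n+1) % 2 + popCount ((n+1) / 2)
decreasing_by omega

/-- The Clifford twist with parameter `μ`. -/
def cliffordTwist (μ : ℤ) (p q : ℕ) : ℤ :=
  if p = 0 ∧ q = 0 then 1
  else
    (if q % 2 = 1 then
      (if p % 2 = 1 then μ else 1) * (-1) ^ popCount (p / 2)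
     else 1) * cliffordTwist μ (p / 2) (q / 2)
termination_by p + q
decreasing_by omega

/-!
Halving `p` and `q` peels off their lowest bits `r = p % 2`, `s = q % 2`. The recursion gives
`ε(p,q) ε(q,p) = μ^(2rs) (-1)^(s β(p/2) + r β(q/2)) ε(p/2,q/2) ε(q/2,p/2)`, and since
`β(p) = r + β(p/2)` and `β(p &&& q) = rs + β(p/2 &&& q/2)`, induction yields
`ε(p,q) ε(q,p) = (-1)^(β(p) β(q) + β(p &&& q))`. Finally `β(p &&& q) ≤ β(p) β(q)`, so the sign
`+` may be replaced by the truncated `-` of the statement.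
-/

lemma popCount_eq_mod_two_add (n : ℕ) : popCount n = n % 2 + popCount (n / 2) := by
  cases n with
  | zero => simp [popCount]
  | succ m => rw [popCount]

lemma Nat.and_mod_two (p q : ℕ) : (p &&& q) % 2 = p % 2 * (q % 2) := by
  have h := Nat.and_mod_two_eq_one (a := p) (b := q)
  have := Nat.mod_two_eq_zero_or_one (p &&& q)
  rcases Nat.mod_two_eq_zero_or_one p with hp | hp <;>
    rcases Nat.mod_two_eq_zero_or_one q with hq | hq <;> rw [hp, hq] at h ⊢ <;> omega

lemma popCount_and (p q : ℕ) :
    popCount (p &&& q) = p % 2 * (q % 2) + popCount (p / 2 &&& q / 2) := by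
  rw [popCount_eq_mod_two_add, Nat.and_mod_two, Nat.and_div_two]

lemma popCount_and_le_mul (p q : ℕ) : popCount (p &&& q) ≤ popCount p * popCount q := by
  induction p using Nat.strong_induction_on generalizing q with
  | _ p ih =>
    rcases Nat.eq_zero_or_pos p with rfl | hp
    · simp [popCount]
    · have hrec := ih (p / 2) (by omega) (q / 2)
      rw [popCount_and, popCount_eq_mod_two_add p, popCount_eq_mod_two_add q]
      have hr : p % 2 ≤ 1 := by omega
      have hs : q % 2 ≤ 1 := by omega
      nlinarith [Nat.zero_le (p % 2 * popCount (q / 2)), Nat.zero_le (q % 2 * popCount (p / 2))]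

lemma cliffordTwist_eq_mul_div_two (μ : ℤ) (p q : ℕ) :
    cliffordTwist μ p q =
      (μ ^ (p % 2) * (-1) ^ popCount (p / 2)) ^ (q % 2) * cliffordTwist μ (p / 2) (q / 2) := by
  by_cases h0 : p = 0 ∧ q = 0
  · obtain ⟨rfl, rfl⟩ := h0
    simp
  · rw [cliffordTwist, if_neg h0]
    rcases Nat.mod_two_eq_zero_or_one p with hp | hp <;>
      rcases Nat.mod_two_eq_zero_or_one q with hq | hq <;> simp [hp, hq]

lemma cliffordTwist_mul_cliffordTwist_swap (μ : ℤ) (hμ : μ ^ 2 = 1) (p q : ℕ) :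
    cliffordTwist μ p q * cliffordTwist μ q p =
      (-1) ^ (popCount p * popCount q + popCount (p &&& q)) := by
  induction h : p + q using Nat.strong_induction_on generalizing p q with
  | _ n ih =>
    by_cases h0 : p = 0 ∧ q = 0
    · obtain ⟨rfl, rfl⟩ := h0
      simp [cliffordTwist, popCount]
    have hrec := ih (p / 2 + q / 2) (by omega) (p / 2) (q / 2) rfl
    rw [cliffordTwist_eq_mul_div_two μ p q, cliffordTwist_eq_mul_div_two μ q p, popCount_and,
      popCount_eq_mod_two_add p, popCount_eq_mod_two_add q]
    set r := p % 2
    set s := q % 2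
    set a := popCount (p / 2)
    set b := popCount (q / 2)
    set c := popCount (p / 2 &&& q / 2)
    calc (μ ^ r * (-1) ^ a) ^ s * cliffordTwist μ (p / 2) (q / 2) *
          ((μ ^ s * (-1) ^ b) ^ r * cliffordTwist μ (q / 2) (p / 2))
        = (μ ^ 2) ^ (r * s) * (-1) ^ (a * s + b * r) *
            (cliffordTwist μ (p / 2) (q / 2) * cliffordTwist μ (q / 2) (p / 2)) := by ring
      _ = (-1) ^ (a * s + b * r) * (-1) ^ (a * b + c) := by
          rw [hμ, hrec, one_pow, one_mul]
      _ = (-1) ^ (2 * (r * s) + (a * s + b * r + (a * b + c))) := by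
          rw [pow_add _ (2 * (r * s)), pow_mul, neg_one_sq, one_pow, one_mul, ← pow_add]
      _ = (-1) ^ ((r + a) * (s + b) + (r * s + c)) := by ring

theorem stmt7 (μ : ℤ) (hμ : μ = 1 ∨ μ = -1) (p q : ℕ) :
    cliffordTwist μ p q * cliffordTwist μ q p =
      (-1) ^ (popCount p * popCount q - popCount (p &&& q)) := by
  have hμ2 : μ ^ 2 = 1 := by rcases hμ with rfl | rfl <;> norm_num
  rw [cliffordTwist_mul_cliffordTwist_swap μ hμ2]
  exact neg_one_pow_congr (by rw [Nat.even_add, Nat.even_sub (popCount_and_le_mul p q)])
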